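/- Let G0 be a connected finite simple graph with a vertex x satisfying d_{G0}(x) ∈ {1, 2}. Let P1 = u1u2⋯uk and P2 = v1v2⋯vl (k, l ≥ 1) be paths, vertex-disjoint from each other and from G0. Let G1 be the graph obtained from the disjoint union of G0, P1 and P2 by adding the edges u1x and v1x, and let G2 be obtained from G1 by deleting the edge u1x and adding the edge u1v_l. Then SO(G1) > SO(G2). -/

import Mathlib

open SimpleGraph

/-- Degree of a vertex (instance-free version). -/
noncomputable def gdeg {V : Type*} [Fintype V] (G : SimpleGraph V) (v : V) : ℕ :=
  (Set.toFinite (G.neighborSet v)).toFinset.card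

/-- Sombor index: sum over edges of sqrt(d(u)^2 + d(v)^2). -/
noncomputable def SO {V : Type*} [Fintype V] (G : SimpleGraph V) : ℝ :=
  ∑ e ∈ (Set.toFinite G.edgeSet).toFinset,
    Sym2.lift ⟨fun u v => Real.sqrt ((gdeg G u : ℝ) ^ 2 + (gdeg G v : ℝ) ^ 2),
      fun u v => by dsimp only; rw [add_comm]⟩ e

/-- Reduced Sombor index: sum over edges of sqrt((d(u)-1)^2 + (d(v)-1)^2). -/
noncomputable def SOred {V : Type*} [Fintype V] (G : SimpleGraph V) : ℝ :=
  ∑ e ∈ (Set.toFinite G.edgeSet).toFinset,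
    Sym2.lift ⟨fun u v => Real.sqrt (((gdeg G u : ℝ) - 1) ^ 2 + ((gdeg G v : ℝ) - 1) ^ 2),
      fun u v => by dsimp only; rw [add_comm]⟩ e

/-! Rotating the edge `u₁x` to `u₁v_l` keeps the degree `a ≤ 2` of `u₁`, lowers the degree
`c ≥ 3` of `x` by one and raises that of the pendant vertex `v_l` from 1 to 2; every other
degree is unchanged. Hence apart from the rotated edge only the edges at `x` (which get lighter)
and the pendant edge at `v_l` change weight. The rotated edge loses
`√(a² + c²) - √(a² + 4) ≥ √13 - √8`. If `v_l` hangs at `x` the pendant edge does not gain at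
all; otherwise its other end has some degree `b ≥ 2` and, `√` being concave, it gains
`√(b² + 4) - √(b² + 1) ≤ √8 - √5 < √13 - √8`. -/

namespace SimpleGraph

variable {V : Type*}

def rotateEdge (G : SimpleGraph V) (u x w : V) : SimpleGraph V :=
  G.deleteEdges {s(u, x)} ⊔ fromEdgeSet {s(u, w)}

variable {G : SimpleGraph V} {u x w v : V}

theorem rotateEdge_adj {a b : V} : (G.rotateEdge u x w).Adj a b ↔
    G.Adj a b ∧ s(a, b) ≠ s(u, x) ∨ s(a, b) = s(u, w) ∧ a ≠ b := by
  simp [rotateEdge]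

theorem edgeSet_rotateEdge (huw : u ≠ w) :
    (G.rotateEdge u x w).edgeSet = insert s(u, w) (G.edgeSet \ {s(u, x)}) := by
  rw [rotateEdge, edgeSet_sup, edgeSet_deleteEdges, edgeSet_fromEdgeSet, Set.insert_eq,
    Set.union_comm, sdiff_eq_left.mpr (by simpa using huw)]

theorem neighborSet_rotateEdge_of_ne (hu : v ≠ u) (hx : v ≠ x) (hw : v ≠ w) :
    (G.rotateEdge u x w).neighborSet v = G.neighborSet v := by
  ext b
  simp [rotateEdge_adj, hu, hx, hw]

theorem neighborSet_rotateEdge_pivot (hux : u ≠ x) (huw : u ≠ w) :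
    (G.rotateEdge u x w).neighborSet u = insert w (G.neighborSet u \ {x}) := by
  ext b
  simp [rotateEdge_adj, hux, huw]
  grind

theorem neighborSet_rotateEdge_old (hux : u ≠ x) (hxw : x ≠ w) :
    (G.rotateEdge u x w).neighborSet x = G.neighborSet x \ {u} := by
  ext b
  simp [rotateEdge_adj, hux.symm, hxw]

theorem neighborSet_rotateEdge_new (huw : u ≠ w) (hxw : x ≠ w) :
    (G.rotateEdge u x w).neighborSet w = insert u (G.neighborSet w) := by
  ext b
  simp [rotateEdge_adj, huw.symm, hxw.symm]
  grind

end SimpleGraph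

section Degree

variable {V : Type*} [Fintype V] {G : SimpleGraph V} {u x w v : V}

theorem gdeg_eq_ncard (G : SimpleGraph V) (v : V) : gdeg G v = (G.neighborSet v).ncard :=
  (Set.ncard_eq_toFinset_card _ _).symm

theorem ncard_le_gdeg {s : Set V} (hs : s ⊆ G.neighborSet v) : s.ncard ≤ gdeg G v :=
  gdeg_eq_ncard G v ▸ Set.ncard_le_ncard hs

theorem gdeg_le_ncard {s : Set V} (hs : G.neighborSet v ⊆ s) : gdeg G v ≤ s.ncard :=
  gdeg_eq_ncard G v ▸ Set.ncard_le_ncard hs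

theorem gdeg_rotateEdge_pivot (hux : G.Adj u x) (huw : ¬G.Adj u w) (hne : u ≠ w) :
    gdeg (G.rotateEdge u x w) u = gdeg G u := by
  rw [gdeg_eq_ncard, gdeg_eq_ncard, G.neighborSet_rotateEdge_pivot hux.ne hne,
    Set.ncard_insert_of_notMem (fun h => huw h.1),
    Set.ncard_sdiff_singleton_add_one (show x ∈ G.neighborSet u from hux)]

theorem gdeg_rotateEdge_old_add_one (hux : G.Adj u x) (hxw : x ≠ w) :
    gdeg (G.rotateEdge u x w) x + 1 = gdeg G x := by
  rw [gdeg_eq_ncard, gdeg_eq_ncard, G.neighborSet_rotateEdge_old hux.ne hxw,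
    Set.ncard_sdiff_singleton_add_one (show u ∈ G.neighborSet x from hux.symm)]

theorem gdeg_rotateEdge_new (huw : ¬G.Adj u w) (hne : u ≠ w) (hxw : x ≠ w) :
    gdeg (G.rotateEdge u x w) w = gdeg G w + 1 := by
  rw [gdeg_eq_ncard, gdeg_eq_ncard, G.neighborSet_rotateEdge_new hne hxw,
    Set.ncard_insert_of_notMem (show u ∉ G.neighborSet w from fun h => huw h.symm)]

theorem gdeg_rotateEdge_of_ne (hu : v ≠ u) (hx : v ≠ x) (hw : v ≠ w) :
    gdeg (G.rotateEdge u x w) v = gdeg G v := by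
  rw [gdeg_eq_ncard, gdeg_eq_ncard, G.neighborSet_rotateEdge_of_ne hu hx hw]

theorem gdeg_rotateEdge_le (hux : G.Adj u x) (huw : ¬G.Adj u w) (hne : u ≠ w) (hv : v ≠ w) :
    gdeg (G.rotateEdge u x w) v ≤ gdeg G v := by
  by_cases hvu : v = u
  · subst hvu
    exact (gdeg_rotateEdge_pivot hux huw hne).le
  by_cases hvx : v = x
  · subst hvx
    have := gdeg_rotateEdge_old_add_one hux hv
    omega
  · exact (gdeg_rotateEdge_of_ne hvu hvx hv).le

end Degree

section Sombor

variable {V : Type*} [Fintype V]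

noncomputable def somborWeight (G : SimpleGraph V) : Sym2 V → ℝ :=
  Sym2.lift ⟨fun u v => √((gdeg G u : ℝ) ^ 2 + (gdeg G v : ℝ) ^ 2),
    fun u v => by dsimp only; rw [add_comm]⟩

theorem SO_eq_sum_somborWeight (G : SimpleGraph V) :
    SO G = ∑ e ∈ (Set.toFinite G.edgeSet).toFinset, somborWeight G e := rfl

theorem somborWeight_mk (G : SimpleGraph V) (a b : V) :
    somborWeight G s(a, b) = √((gdeg G a : ℝ) ^ 2 + (gdeg G b : ℝ) ^ 2) := rfl

theorem somborWeight_le {G G' : SimpleGraph V} {a b : V}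
    (ha : gdeg G' a ≤ gdeg G a) (hb : gdeg G' b ≤ gdeg G b) :
    somborWeight G' s(a, b) ≤ somborWeight G s(a, b) := by
  rw [somborWeight_mk, somborWeight_mk]
  gcongr

theorem SO_lt_of_edgeSet_eq_insert_sdiff {G G' : SimpleGraph V} {eOut eIn e₀ : Sym2 V}
    (hOut : eOut ∈ G.edgeSet) (hIn : eIn ∉ G.edgeSet) (he₀ : e₀ ∈ G.edgeSet) (hne : e₀ ≠ eOut)
    (hE : G'.edgeSet = insert eIn (G.edgeSet \ {eOut}))
    (hle : ∀ e ∈ G.edgeSet, e ≠ eOut → e ≠ e₀ → somborWeight G' e ≤ somborWeight G e)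
    (hlt : somborWeight G' eIn + somborWeight G' e₀ < somborWeight G eOut + somborWeight G e₀) :
    SO G' < SO G := by
  classical
  set E := (Set.toFinite G.edgeSet).toFinset
  have hE' : (Set.toFinite G'.edgeSet).toFinset = insert eIn (E.erase eOut) := by
    ext e
    simp [E, hE, and_comm]
  have hIn' : eIn ∉ E.erase eOut := fun h => hIn (by simpa [E] using Finset.mem_of_mem_erase h)
  have he₀' : e₀ ∈ E.erase eOut := by simpa [E, hne] using he₀
  have hrest : ∑ e ∈ (E.erase eOut).erase e₀, somborWeight G' e ≤
      ∑ e ∈ (E.erase eOut).erase e₀, somborWeight G e :=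
    Finset.sum_le_sum fun e he => by
      simp only [Finset.mem_erase] at he
      exact hle e (by simpa [E] using he.2.2) he.2.1 he.1
  rw [SO_eq_sum_somborWeight, SO_eq_sum_somborWeight, hE', Finset.sum_insert hIn',
    ← Finset.add_sum_erase E _ (by simpa [E] using hOut), ← Finset.add_sum_erase _ _ he₀',
    ← Finset.add_sum_erase _ (somborWeight G) he₀']
  linarith

end Sombor

theorem Real.sqrt_add_add_sqrt_le {s t d : ℝ} (hs : 0 ≤ s) (hst : s ≤ t) (hd : 0 ≤ d) :
    √(t + d) + √s ≤ √(s + d) + √t := by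
  have hprod : √((t + d) * s) ≤ √((s + d) * t) := Real.sqrt_le_sqrt (by nlinarith)
  rw [Real.sqrt_mul (by linarith), Real.sqrt_mul (by linarith)] at hprod
  refine (pow_le_pow_iff_left₀ (by positivity) (by positivity) two_ne_zero).mp ?_
  rw [add_sq, add_sq, Real.sq_sqrt (by linarith), Real.sq_sqrt hs, Real.sq_sqrt (by linarith),
    Real.sq_sqrt (by linarith)]
  linarith

theorem Real.two_mul_sqrt_eight_lt : 2 * √8 < √13 + √5 := by
  have h8 : √8 < 2.83 := (Real.sqrt_lt' (by norm_num)).mpr (by norm_num)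
  have h13 : 3.6 < √13 := (Real.lt_sqrt (by norm_num)).mpr (by norm_num)
  have h5 : 2.2 < √5 := (Real.lt_sqrt (by norm_num)).mpr (by norm_num)
  linarith

theorem sqrt_add_sqrt_lt_of_three_le (a : ℝ) {c : ℝ} (hc : 3 ≤ c) :
    √(a ^ 2 + 2 ^ 2) + √((c - 1) ^ 2 + 2 ^ 2) < √(a ^ 2 + c ^ 2) + √(c ^ 2 + 1 ^ 2) := by
  have h₁ : √(a ^ 2 + 2 ^ 2) < √(a ^ 2 + c ^ 2) := Real.sqrt_lt_sqrt (by positivity) (by nlinarith)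
  have h₂ : √((c - 1) ^ 2 + 2 ^ 2) ≤ √(c ^ 2 + 1 ^ 2) := Real.sqrt_le_sqrt (by nlinarith)
  linarith

theorem sqrt_add_sqrt_lt_of_le_two_of_three_le_of_two_le {a b c : ℝ} (ha : 0 ≤ a) (ha₂ : a ≤ 2)
    (hb : 2 ≤ b) (hc : 3 ≤ c) :
    √(a ^ 2 + 2 ^ 2) + √(b ^ 2 + 2 ^ 2) < √(a ^ 2 + c ^ 2) + √(b ^ 2 + 1 ^ 2) := by
  have ha' : √13 + √(a ^ 2 + 2 ^ 2) ≤ √(a ^ 2 + 9) + √8 := by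
    convert Real.sqrt_add_add_sqrt_le (d := 5) (by positivity)
      (show a ^ 2 + 2 ^ 2 ≤ 8 by nlinarith [ha]) (by norm_num) using 3 <;> ring
  have hb' : √(b ^ 2 + 2 ^ 2) + √5 ≤ √8 + √(b ^ 2 + 1 ^ 2) := by
    convert Real.sqrt_add_add_sqrt_le (d := 3) (by norm_num)
      (show (5 : ℝ) ≤ b ^ 2 + 1 ^ 2 by nlinarith) (by norm_num) using 3 <;> ring
  have hc' : √(a ^ 2 + 9) ≤ √(a ^ 2 + c ^ 2) := Real.sqrt_le_sqrt (by nlinarith)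
  linarith [Real.two_mul_sqrt_eight_lt]

section Rotation

variable {V : Type*} [Fintype V] {G : SimpleGraph V} {u x w w' : V}

theorem SO_rotateEdge_lt (hux : G.Adj u x) (huw : ¬G.Adj u w) (hne : u ≠ w)
    (hw : G.neighborSet w = {w'}) (hu : gdeg G u ≤ 2) (hx : 3 ≤ gdeg G x)
    (hw' : w' = x ∨ 2 ≤ gdeg G w') : SO (G.rotateEdge u x w) < SO G := by
  have hdw : gdeg G w = 1 := by rw [gdeg_eq_ncard, hw, Set.ncard_singleton]
  have hxw : x ≠ w := by rintro rfl; omega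
  have hww' : G.Adj w w' := show w' ∈ G.neighborSet w by simp [hw]
  have hne₀ : s(w', w) ≠ s(u, x) := by
    simp only [ne_eq, Sym2.eq_iff, not_or, not_and]
    exact ⟨fun _ h => hxw h.symm, fun _ h => hne h.symm⟩
  refine SO_lt_of_edgeSet_eq_insert_sdiff hux huw hww'.symm hne₀ (edgeSet_rotateEdge hne) ?_ ?_
  · intro e he heOut he₀
    induction e using Sym2.ind with
    | _ a b =>
      have hnw : ∀ {c d}, G.Adj c d → s(c, d) ≠ s(w', w) → c ≠ w := by
        rintro c d hcd hcd' rfl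
        obtain rfl : d = w' := by simpa [hw] using show d ∈ G.neighborSet c from hcd
        exact hcd' Sym2.eq_swap
      exact somborWeight_le (gdeg_rotateEdge_le hux huw hne (hnw he he₀))
        (gdeg_rotateEdge_le hux huw hne (hnw (G.adj_symm he) (by rwa [Sym2.eq_swap])))
  · have hdx := gdeg_rotateEdge_old_add_one hux hxw
    simp only [somborWeight_mk, gdeg_rotateEdge_pivot hux huw hne, gdeg_rotateEdge_new huw hne hxw,
      hdw]
    by_cases hw'x : w' = x
    · subst hw'x
      rw [show (gdeg (G.rotateEdge u w' w) w' : ℝ) = gdeg G w' - 1 by rw [← hdx]; push_cast; ring]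
      push_cast
      exact sqrt_add_sqrt_lt_of_three_le _ (by exact_mod_cast hx)
    · rw [gdeg_rotateEdge_of_ne (by rintro rfl; exact huw hww'.symm) hw'x hww'.ne.symm]
      push_cast
      exact sqrt_add_sqrt_lt_of_le_two_of_three_le_of_two_le (by positivity)
        (by exact_mod_cast hu) (by exact_mod_cast hw'.resolve_left hw'x) (by exact_mod_cast hx)

end Rotation

section TwoPaths

variable {α : Type*} (G₀ : SimpleGraph α) (x : α) {k l : ℕ} (hk : 1 ≤ k) (hl : 1 ≤ l)

-- `.inr (.inl i)` is `u_{i+1}` and `.inr (.inr j)` is `v_{j+1}`.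
def attachTwoPaths : SimpleGraph (α ⊕ (Fin k ⊕ Fin l)) :=
  (G₀ ⊕g (pathGraph k ⊕g pathGraph l)) ⊔
    fromEdgeSet {s(.inr (.inl ⟨0, hk⟩), .inl x), s(.inr (.inr ⟨0, hl⟩), .inl x)}

def secondPathPred (j : Fin l) : α ⊕ (Fin k ⊕ Fin l) :=
  if (j : ℕ) = 0 then .inl x else .inr (.inr ⟨j - 1, (Nat.sub_le _ _).trans_lt j.isLt⟩)

variable {G₀ x}

theorem attachTwoPaths_adj_secondPathPred (j : Fin l) :
    (attachTwoPaths G₀ x hk hl).Adj (.inr (.inr j)) (secondPathPred (k := k) x j) := by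
  unfold secondPathPred
  split_ifs with h
  · simp [attachTwoPaths, Fin.ext_iff, h]
  · simp [attachTwoPaths, pathGraph_adj]
    omega

theorem attachTwoPaths_neighborSet_last :
    (attachTwoPaths G₀ x hk hl).neighborSet (.inr (.inr ⟨l - 1, Nat.sub_lt hl Nat.one_pos⟩)) =
      {secondPathPred (k := k) x ⟨l - 1, Nat.sub_lt hl Nat.one_pos⟩} := by
  ext b
  refine ⟨fun hb => ?_, fun hb => hb ▸ attachTwoPaths_adj_secondPathPred hk hl _⟩
  rcases b with y | i | i <;>
    simp [attachTwoPaths, secondPathPred, pathGraph_adj, Fin.ext_iff] at hb ⊢ <;>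
    split_ifs <;> grind

theorem attachTwoPaths_adj_first :
    (attachTwoPaths G₀ x hk hl).Adj (.inr (.inl ⟨0, hk⟩)) (.inl x) := by
  simp [attachTwoPaths]

theorem attachTwoPaths_not_adj_first_last :
    ¬(attachTwoPaths G₀ x hk hl).Adj (.inr (.inl ⟨0, hk⟩))
      (.inr (.inr ⟨l - 1, Nat.sub_lt hl Nat.one_pos⟩)) := by
  simp [attachTwoPaths]

variable [Fintype α]

theorem gdeg_attachTwoPaths_first_le :
    gdeg (attachTwoPaths G₀ x hk hl) (.inr (.inl ⟨0, hk⟩)) ≤ 2 := by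
  -- `.inr (.inl ⟨1 % k, _⟩)` is `u₂`, or `u₁` itself when `k = 1`.
  calc _ ≤ ({.inl x, .inr (.inl ⟨1 % k, Nat.mod_lt _ hk⟩)} : Set (α ⊕ (Fin k ⊕ Fin l))).ncard := by
        refine gdeg_le_ncard fun b hb => ?_
        rcases b with y | i | i <;>
          simp [attachTwoPaths, pathGraph_adj, Fin.ext_iff] at hb ⊢
        · exact hb
        · rw [Nat.mod_eq_of_lt (by omega)]
          omega
    _ ≤ 2 := Set.ncard_insert_le _ _ |>.trans (by simp)

theorem three_le_gdeg_attachTwoPaths {y : α} (hy : G₀.Adj x y) :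
    3 ≤ gdeg (attachTwoPaths G₀ x hk hl) (.inl x) := by
  have hsub : ({.inr (.inl ⟨0, hk⟩), .inr (.inr ⟨0, hl⟩), .inl y} : Set (α ⊕ (Fin k ⊕ Fin l))) ⊆
      (attachTwoPaths G₀ x hk hl).neighborSet (.inl x) := by
    simp [Set.insert_subset_iff, attachTwoPaths, hy]
  simpa [Set.ncard_insert_of_notMem, Set.ncard_pair] using ncard_le_gdeg hsub

theorem two_le_gdeg_attachTwoPaths (j : Fin l) (hj : (j : ℕ) + 1 < l) :
    2 ≤ gdeg (attachTwoPaths G₀ x hk hl) (.inr (.inr j)) := by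
  calc 2 = ({secondPathPred (k := k) x j, .inr (.inr ⟨j + 1, hj⟩)} : Set _).ncard := by
        rw [Set.ncard_pair]
        unfold secondPathPred
        split_ifs <;> simp
    _ ≤ _ := by
        refine ncard_le_gdeg (Set.pair_subset ?_ ?_)
        · exact attachTwoPaths_adj_secondPathPred hk hl j
        · simp [attachTwoPaths, pathGraph_adj]

theorem secondPathPred_eq_inl_or_two_le_gdeg (j : Fin l) :
    secondPathPred (k := k) x j = .inl x ∨
      2 ≤ gdeg (attachTwoPaths G₀ x hk hl) (secondPathPred x j) := by
  unfold secondPathPred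
  split_ifs
  · exact .inl rfl
  · exact .inr (two_le_gdeg_attachTwoPaths hk hl _ (by simp only; omega))

end TwoPaths

/-- Lemma 2.3 for `SO`. -/
theorem lemma23_SO {α : Type*} [Fintype α] (G₀ : SimpleGraph α)
    (x : α)
    (hdx : gdeg G₀ x = 1 ∨ gdeg G₀ x = 2)
    (k l : ℕ) (hk : 1 ≤ k) (hl : 1 ≤ l)
    (G₁ G₂ : SimpleGraph (α ⊕ (Fin k ⊕ Fin l)))
    (hG₁ : G₁ = (G₀ ⊕g (pathGraph k ⊕g pathGraph l)) ⊔
      fromEdgeSet {s(Sum.inr (Sum.inl ⟨0, by omega⟩), Sum.inl x),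
                   s(Sum.inr (Sum.inr ⟨0, by omega⟩), Sum.inl x)})
    (hG₂ : G₂ = (G₁.deleteEdges {s(Sum.inr (Sum.inl ⟨0, by omega⟩), Sum.inl x)}) ⊔
      fromEdgeSet {s(Sum.inr (Sum.inl ⟨0, by omega⟩), Sum.inr (Sum.inr ⟨l - 1, by omega⟩))}) :
    SO G₂ < SO G₁ := by
  obtain ⟨y, hy⟩ : (G₀.neighborSet x).Nonempty :=
    Set.nonempty_of_ncard_ne_zero (by rw [← gdeg_eq_ncard]; omega)
  subst hG₁ hG₂
  exact SO_rotateEdge_lt (attachTwoPaths_adj_first hk hl)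
    (attachTwoPaths_not_adj_first_last hk hl) (by simp) (attachTwoPaths_neighborSet_last hk hl)
    (gdeg_attachTwoPaths_first_le hk hl) (three_le_gdeg_attachTwoPaths hk hl hy)
    (secondPathPred_eq_inl_or_two_le_gdeg hk hl _)
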